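/- Consider minimizing q₀(x) = −√2·x₁² + x₁x₂ over the set S = {x ∈ R³ : x₁²+x₂²+x₃² = 1, 2x₁² + x₂²/2 + x₃² = 1}. Every point of the circle C₁ = {(√2 t, 2t, s) : 6t² + s² = 1} ∖ {(0,0,±1)} is a local minimizer of q₀ on S that is not a global minimizer; in particular q₀ ≡ 0 on C₁ while the global minimum is −2√2/3, attained at ±(1/√3, −√2/√3, 0). -/
import Mathlib


/-- A point of `ℝ³` as a Euclidean space element. -/
noncomputable def pt3 (a b c : ℝ) : EuclideanSpace ℝ (Fin 3) :=
  (WithLp.equiv 2 (Fin 3 → ℝ)).symm ![a, b, c]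

/-- The objective `q₀(x) = −√2·x₁² + x₁x₂`. -/
noncomputable def q18 (x : EuclideanSpace ℝ (Fin 3)) : ℝ :=
  -Real.sqrt 2 * x 0 ^ 2 + x 0 * x 1

/-- The feasible set of Example 5.4'. -/
def S18 : Set (EuclideanSpace ℝ (Fin 3)) :=
  {x | x 0 ^ 2 + x 1 ^ 2 + x 2 ^ 2 = 1 ∧ 2 * x 0 ^ 2 + x 1 ^ 2 / 2 + x 2 ^ 2 = 1}

/-- Membership in the circle `C₁ = {(√2 t, 2t, s) : 6t² + s² = 1}`. -/
def memC1 (x : EuclideanSpace ℝ (Fin 3)) : Prop :=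
  ∃ t s : ℝ, 6 * t ^ 2 + s ^ 2 = 1 ∧ x = pt3 (Real.sqrt 2 * t) (2 * t) s

lemma pt3_app0 (a b c : ℝ) : pt3 a b c 0 = a := rfl
lemma pt3_app1 (a b c : ℝ) : pt3 a b c 1 = b := rfl
lemma pt3_app2 (a b c : ℝ) : pt3 a b c 2 = c := rfl

lemma coord_le (x y : EuclideanSpace ℝ (Fin 3)) (i : Fin 3) : (y i - x i)^2 ≤ ‖y - x‖^2 := by
  rw [EuclideanSpace.norm_eq, Real.sq_sqrt (by positivity)]
  have := Finset.single_le_sum (f := fun j => ‖(y - x) j‖^2) (fun j _ => by positivity) (Finset.mem_univ i)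
  simpa [Real.norm_eq_abs, sq_abs] using this

set_option maxHeartbeats 1000000 in
theorem stmt18 :
    -- q₀ vanishes identically on C₁
    (∀ x, memC1 x → q18 x = 0) ∧
    -- every point of C₁ other than the poles is a local non-global minimizer on S
    (∀ x, memC1 x → x ≠ pt3 0 0 1 → x ≠ pt3 0 0 (-1) →
      ((∃ ε > 0, ∀ y ∈ S18, ‖y - x‖ < ε → q18 x ≤ q18 y) ∧
        ¬ (∀ y ∈ S18, q18 x ≤ q18 y))) ∧
    -- the global minimum is −2√2/3, attained at ±(1/√3, −√2/√3, 0)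
    (∀ x ∈ S18, -(2 * Real.sqrt 2) / 3 ≤ q18 x) ∧
    pt3 (1 / Real.sqrt 3) (-(Real.sqrt 2 / Real.sqrt 3)) 0 ∈ S18 ∧
    q18 (pt3 (1 / Real.sqrt 3) (-(Real.sqrt 2 / Real.sqrt 3)) 0) = -(2 * Real.sqrt 2) / 3 ∧
    pt3 (-(1 / Real.sqrt 3)) (Real.sqrt 2 / Real.sqrt 3) 0 ∈ S18 ∧
    q18 (pt3 (-(1 / Real.sqrt 3)) (Real.sqrt 2 / Real.sqrt 3) 0) = -(2 * Real.sqrt 2) / 3 := by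
  have hr2 : Real.sqrt 2 ^ 2 = 2 := Real.sq_sqrt (by norm_num)
  have hr2p : (0:ℝ) < Real.sqrt 2 := Real.sqrt_pos.mpr (by norm_num)
  have hr3 : Real.sqrt 3 ^ 2 = 3 := Real.sq_sqrt (by norm_num)
  have hr3p : (0:ℝ) < Real.sqrt 3 := Real.sqrt_pos.mpr (by norm_num)
  set r := Real.sqrt 2 with hr
  set a := Real.sqrt 3 with ha
  have h13 : (1 / a) ^ 2 = 1 / 3 := by rw [div_pow, one_pow, hr3]
  have hr2a : (r / a) ^ 2 = 2 / 3 := by rw [div_pow, hr2, hr3]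
  have hrq : (1 / a) * (r / a) = r / 3 := by rw [div_mul_div_comm, one_mul, ← pow_two, hr3]
  -- q vanishes on C1
  have hC1 : ∀ x, memC1 x → q18 x = 0 := by
    rintro x ⟨t, s, ht, rfl⟩
    show -r * (r * t) ^ 2 + (r * t) * (2 * t) = 0
    nlinarith [hr2]
  have hw1 : pt3 (1 / a) (-(r / a)) 0 ∈ S18 := by
    constructor
    · show (1/a) ^ 2 + (-(r/a)) ^ 2 + (0:ℝ) ^ 2 = 1
      linear_combination h13 + hr2a
    · show 2 * (1/a) ^ 2 + (-(r/a)) ^ 2 / 2 + (0:ℝ) ^ 2 = 1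
      linear_combination 2 * h13 + hr2a / 2
  have hw2 : pt3 (-(1 / a)) (r / a) 0 ∈ S18 := by
    constructor
    · show (-(1/a)) ^ 2 + (r/a) ^ 2 + (0:ℝ) ^ 2 = 1
      linear_combination h13 + hr2a
    · show 2 * (-(1/a)) ^ 2 + (r/a) ^ 2 / 2 + (0:ℝ) ^ 2 = 1
      linear_combination 2 * h13 + hr2a / 2
  have hv1 : q18 (pt3 (1 / a) (-(r / a)) 0) = -(2 * r) / 3 := by
    show -r * (1/a) ^ 2 + (1/a) * (-(r/a)) = -(2 * r) / 3
    linear_combination (-r) * h13 - hrq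
  have hv2 : q18 (pt3 (-(1 / a)) (r / a) 0) = -(2 * r) / 3 := by
    show -r * (-(1/a)) ^ 2 + (-(1/a)) * (r/a) = -(2 * r) / 3
    linear_combination (-r) * h13 - hrq
  have hglob : ∀ x ∈ S18, -(2 * r) / 3 ≤ q18 x := by
    rintro x ⟨h1, h2⟩
    show -(2 * r) / 3 ≤ -r * x 0 ^ 2 + x 0 * x 1
    nlinarith [sq_nonneg (x 1 + r * x 0), sq_nonneg (x 2), hr2, hr2p,
      sq_nonneg (x 0), mul_nonneg hr2p.le (sq_nonneg (x 0))]
  refine ⟨hC1, ?_, hglob, hw1, hv1, hw2, hv2⟩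
  rintro x hx hp1 hp2
  have h0 : q18 x = 0 := hC1 x hx
  obtain ⟨t, s, ht, rfl⟩ := hx
  have htne : t ≠ 0 := by
    rintro rfl
    have hs : (s - 1) * (s + 1) = 0 := by nlinarith
    rcases mul_eq_zero.mp hs with h | h
    · exact hp1 (by rw [mul_zero, mul_zero, show s = 1 by linarith])
    · exact hp2 (by rw [mul_zero, mul_zero, show s = -1 by linarith])
  have ht2 : 0 < t ^ 2 := by positivity
  constructor
  · refine ⟨r * |t|, mul_pos hr2p (abs_pos.mpr htne), fun y hy hny => ?_⟩
    obtain ⟨h1, h2⟩ := hy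
    rw [h0]
    have hsq : y 1 ^ 2 = 2 * y 0 ^ 2 := by linarith
    have hcases : (y 1 - r * y 0) * (y 1 + r * y 0) = 0 := by nlinarith [hr2]
    rcases mul_eq_zero.mp hcases with h | h
    · have hy1 : y 1 = r * y 0 := by linarith
      have : q18 y = 0 := by show -r * y 0 ^ 2 + y 0 * y 1 = 0; rw [hy1]; ring
      linarith
    · exfalso
      have hy1 : y 1 = -(r * y 0) := by linarith
      have hn2 : ‖y - pt3 (r * t) (2 * t) s‖ ^ 2 < (r * |t|) ^ 2 :=
        pow_lt_pow_left₀ hny (norm_nonneg _) (by norm_num)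
      have heps : (r * |t|) ^ 2 = 2 * t ^ 2 := by rw [mul_pow, hr2, sq_abs]
      have hb0 : (y 0 - r * t) ^ 2 < 2 * t ^ 2 := by
        have := coord_le (pt3 (r * t) (2 * t) s) y 0
        rw [pt3_app0] at this; linarith
      have hb1 : (y 1 - 2 * t) ^ 2 < 2 * t ^ 2 := by
        have := coord_le (pt3 (r * t) (2 * t) s) y 1
        rw [pt3_app1] at this; linarith
      rw [hy1] at hb1
      have e1 : r ^ 2 * t ^ 2 = 2 * t ^ 2 := by rw [hr2]
      have e2 : r ^ 2 * y 0 ^ 2 = 2 * y 0 ^ 2 := by rw [hr2]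
      linarith [sq_nonneg (3 * y 0 + r * t), e1, e2, ht2, hb0, hb1]
  · intro hgl
    have := hgl _ hw1
    rw [hv1, h0] at this
    linarith
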